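/- arXiv:0909.0823 — 3 statements merged into one kernel-verified Lean document; each statement's English description precedes it below -/
import Mathlib

section
/- Let $x \in \mathbb{R}^p$, $h > 0$, and let $(X_i, Y_i)$, $1 \le i \le n$, be points of $\mathbb{R}^p \times \mathbb{R}$ with $\mathcal{I}(x,h) = \{i : \|X_i - x\| \le h\}$ nonempty. Then $\tilde{a}(x) = \sup\{\alpha : (\alpha, \beta) \in \mathcal{S}(x,h)\}$ is finite if and only if $0$ lies in the convex hull of the finite set $\{X_i - x : i \in \mathcal{I}(x,h)\}$. (If $0$ is not in the convex hull, a separating hyperplane yields a direction $\beta_0$ with $\beta_0^T(X_i - x) < 0$ for all $i \in \mathcal{I}(x,h)$ and hence $\tilde{a}(x) = +\infty$; if $0$ is in the convex hull, then $\tilde{a}(x) \le \max_{i \in \mathcal{I}(x,h)} Y_i$.) -/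
/- STATEMENT 8: with I(x,h) = {i : ‖Xᵢ - x‖ ≤ h} nonempty, ã(x) is finite iff
0 lies in the convex hull of {Xᵢ - x : i ∈ I(x,h)}; moreover if 0 is in the
convex hull then ã(x) ≤ max_{i ∈ I(x,h)} Yᵢ. -/

open scoped RealInnerProductSpace

/-- `S(x,h)`: the set of intercepts `α` for which some slope `β` makes the plane
`α + βᵀ(· - x)` lie below all data points `(Xᵢ, Yᵢ)` with `‖Xᵢ - x‖ ≤ h`. -/
def endpointIntercepts {p : ℕ} (X : ℕ → EuclideanSpace ℝ (Fin p)) (Y : ℕ → ℝ)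
    (n : ℕ) (x : EuclideanSpace ℝ (Fin p)) (h : ℝ) : Set ℝ :=
  {α | ∃ β : EuclideanSpace ℝ (Fin p),
    ∀ i ∈ Finset.range n, ‖X i - x‖ ≤ h → α + ⟪β, X i - x⟫ ≤ Y i}

/-- The end-point estimator `ã(x)`, as an extended real number. -/
noncomputable def endpointEstimator {p : ℕ} (X : ℕ → EuclideanSpace ℝ (Fin p)) (Y : ℕ → ℝ)
    (n : ℕ) (x : EuclideanSpace ℝ (Fin p)) (h : ℝ) : EReal :=
  sSup ((fun α : ℝ => (α : EReal)) '' endpointIntercepts X Y n x h)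

theorem stmt_8 {p n : ℕ} (X : ℕ → EuclideanSpace ℝ (Fin p)) (Y : ℕ → ℝ)
    (x : EuclideanSpace ℝ (Fin p)) (h : ℝ) (hh : 0 < h)
    (hne : ∃ i ∈ Finset.range n, ‖X i - x‖ ≤ h) :
    (endpointEstimator X Y n x h ≠ ⊤ ↔
      (0 : EuclideanSpace ℝ (Fin p)) ∈
        convexHull ℝ ((fun i => X i - x) '' {i | i ∈ Finset.range n ∧ ‖X i - x‖ ≤ h})) ∧
    ((0 : EuclideanSpace ℝ (Fin p)) ∈
        convexHull ℝ ((fun i => X i - x) '' {i | i ∈ Finset.range n ∧ ‖X i - x‖ ≤ h}) →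
      endpointEstimator X Y n x h ≤
        sSup ((fun i => (Y i : EReal)) '' {i | i ∈ Finset.range n ∧ ‖X i - x‖ ≤ h})) := by
  classical
  set T : Finset ℕ := (Finset.range n).filter (fun i => ‖X i - x‖ ≤ h) with hT
  have hTmem : ∀ i, i ∈ T ↔ i ∈ Finset.range n ∧ ‖X i - x‖ ≤ h := by
    intro i; simp [hT]
  have hTne : T.Nonempty := by
    obtain ⟨i, hi, hih⟩ := hne
    exact ⟨i, (hTmem i).2 ⟨hi, hih⟩⟩
  have hset : {i | i ∈ Finset.range n ∧ ‖X i - x‖ ≤ h} = (↑T : Set ℕ) := by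
    ext i; simp [hTmem]
  set M : ℝ := T.sup' hTne Y with hM
  -- Key 1: if 0 ∈ hull then every α in S is ≤ M.
  have key1 : (0 : EuclideanSpace ℝ (Fin p)) ∈
      convexHull ℝ ((fun i => X i - x) '' (↑T : Set ℕ)) →
      ∀ α ∈ endpointIntercepts X Y n x h, α ≤ M := by
    intro h0 α hα
    obtain ⟨β, hβ⟩ := hα
    rw [convexHull_eq] at h0
    obtain ⟨ι, t, w, z, hw0, hw1, hz, hcm⟩ := h0
    have hzM : ∀ i ∈ t, α + ⟪β, z i⟫ ≤ M := by
      intro i hi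
      obtain ⟨j, hj, hjz⟩ := hz i hi
      obtain ⟨hj1, hj2⟩ := (hTmem j).1 hj
      have hle : α + ⟪β, z i⟫ ≤ Y j := by
        rw [← hjz]; exact hβ j hj1 hj2
      exact hle.trans (Finset.le_sup' Y (Finset.mem_coe.1 hj))
    have hsum : ∑ i ∈ t, w i • z i = 0 := by
      rwa [Finset.centerMass, hw1, inv_one, one_smul] at hcm
    have hcalc : α + ⟪β, (0 : EuclideanSpace ℝ (Fin p))⟫ ≤ M := by
      have h1 : α + ⟪β, (0 : EuclideanSpace ℝ (Fin p))⟫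
          = ∑ i ∈ t, w i * (α + ⟪β, z i⟫) := by
        rw [← hsum, inner_sum]
        simp only [real_inner_smul_right, mul_add]
        rw [Finset.sum_add_distrib, ← Finset.sum_mul, hw1]
        ring
      have h2 : ∑ i ∈ t, w i * (α + ⟪β, z i⟫) ≤ ∑ i ∈ t, w i * M := by
        refine Finset.sum_le_sum fun i hi => ?_
        exact mul_le_mul_of_nonneg_left (hzM i hi) (hw0 i hi)
      rw [h1]
      calc ∑ i ∈ t, w i * (α + ⟪β, z i⟫) ≤ ∑ i ∈ t, w i * M := h2
        _ = (∑ i ∈ t, w i) * M := by rw [Finset.sum_mul]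
        _ = M := by rw [hw1, one_mul]
    simpa using hcalc
  -- Key 2: if 0 ∉ hull then the estimator is ⊤.
  have key2 : (0 : EuclideanSpace ℝ (Fin p)) ∉
      convexHull ℝ ((fun i => X i - x) '' (↑T : Set ℕ)) →
      endpointEstimator X Y n x h = ⊤ := by
    intro h0
    have hfin : ((fun i => X i - x) '' (↑T : Set ℕ)).Finite :=
      (T.finite_toSet.image _)
    have hclosed : IsClosed (convexHull ℝ ((fun i => X i - x) '' (↑T : Set ℕ))) :=
      (hfin.isCompact_convexHull ℝ).isClosed
    obtain ⟨f, u, hfu, hub⟩ :=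
      geometric_hahn_banach_point_closed (convex_convexHull ℝ _) hclosed h0
    have hf0 : f 0 = 0 := map_zero f
    have hu : 0 < u := by rw [← hf0]; exact hfu
    set β : EuclideanSpace ℝ (Fin p) := (InnerProductSpace.toDual ℝ _).symm f with hβdef
    have hβf : ∀ v, ⟪β, v⟫ = f v := fun v =>
      InnerProductSpace.toDual_symm_apply
    have hall : ∀ α : ℝ, α ∈ endpointIntercepts X Y n x h := by
      intro α
      set c : ℝ := max 0 (T.sup' hTne (fun i => (α - Y i) / u)) with hc
      have hc0 : 0 ≤ c := le_max_left _ _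
      refine ⟨(-c) • β, fun i hi hih => ?_⟩
      have hiT : i ∈ T := (hTmem i).2 ⟨hi, hih⟩
      have hfi : u < f (X i - x) := by
        apply hub
        exact subset_convexHull ℝ _ ⟨i, by simpa [hset] using hiT, rfl⟩
      have hci : (α - Y i) / u ≤ c :=
        le_trans (Finset.le_sup' (fun i => (α - Y i) / u) hiT) (le_max_right _ _)
      have hcu : α - Y i ≤ c * u := by
        rw [div_le_iff₀ hu] at hci; linarith
      have hinner : ⟪(-c) • β, X i - x⟫ = -c * f (X i - x) := by
        rw [real_inner_smul_left, hβf]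
      rw [hinner]
      have : c * u ≤ c * f (X i - x) :=
        mul_le_mul_of_nonneg_left hfi.le hc0
      nlinarith
    rw [endpointEstimator, sSup_eq_top]
    intro y hy
    induction y with
    | bot => exact ⟨(0 : ℝ), ⟨0, hall 0, rfl⟩, by simp⟩
    | coe r => exact ⟨((r + 1 : ℝ) : EReal), ⟨r + 1, hall (r + 1), rfl⟩,
        by exact_mod_cast (lt_add_one r)⟩
    | top => exact absurd hy (lt_irrefl _)
  have hboundM : (0 : EuclideanSpace ℝ (Fin p)) ∈
      convexHull ℝ ((fun i => X i - x) '' (↑T : Set ℕ)) →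
      endpointEstimator X Y n x h ≤ (M : EReal) := by
    intro h0
    rw [endpointEstimator]
    refine sSup_le ?_
    rintro y ⟨α, hα, rfl⟩
    show (α : EReal) ≤ (M : EReal)
    exact_mod_cast key1 h0 α hα
  constructor
  · rw [hset]
    constructor
    · intro hne'
      by_contra h0
      exact hne' (key2 h0)
    · intro h0
      have := hboundM h0
      intro htop
      rw [htop] at this
      exact absurd (le_antisymm le_top this).symm (by simp [EReal.coe_ne_top])
  · rw [hset]
    intro h0
    refine (hboundM h0).trans ?_
    obtain ⟨i0, hi0, hMi0⟩ := T.exists_mem_eq_sup' hTne Y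
    have : ((Y i0 : ℝ) : EReal) ∈ (fun i => (Y i : EReal)) '' (↑T : Set ℕ) :=
      ⟨i0, hi0, rfl⟩
    rw [hM, hMi0]
    exact le_sSup this
end

section
/- Let $\mathcal{R} \subseteq \mathbb{R}^p$ be a convex set with nonempty interior, let $x_0$ be a boundary point of $\mathcal{R}$ (i.e. $x_0 \in \mathcal{R} \setminus \mathrm{int}\,\mathcal{R}$ or $x_0 \in \partial\mathcal{R}$), and suppose every design point $X_i$ with $\|X_i - x_0\| \le h$ lies in the interior of $\mathcal{R}$. Then $\tilde{a}(x_0) = \sup\{\alpha : (\alpha, \beta) \in \mathcal{S}(x_0, h)\} = +\infty$. In particular, if the design points have a density supported on a convex region $\mathcal{R}$ with smooth boundary, then with probability 1 the estimator $\tilde{a}$ is infinite at every boundary point of $\mathcal{R}$. -/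
/- STATEMENT 9: if R is convex (with nonempty interior), x₀ is a boundary point of R,
and every design point within distance h of x₀ lies in the interior of R, then the
end-point estimator satisfies ã(x₀) = +∞. -/

open scoped RealInnerProductSpace

theorem stmt_9 {p n : ℕ} (X : ℕ → EuclideanSpace ℝ (Fin p)) (Y : ℕ → ℝ)
    (R : Set (EuclideanSpace ℝ (Fin p))) (hR : Convex ℝ R)
    (hRint : (interior R).Nonempty)
    (x₀ : EuclideanSpace ℝ (Fin p)) (hx₀ : x₀ ∈ frontier R)
    (h : ℝ) (hh : 0 < h)
    (hX : ∀ i ∈ Finset.range n, ‖X i - x₀‖ ≤ h → X i ∈ interior R) :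
    endpointEstimator X Y n x₀ h = ⊤ := by
  -- x₀ is not in the interior
  have hx₀' : x₀ ∉ interior R := hx₀.2
  obtain ⟨f, hf⟩ := geometric_hahn_banach_open_point (hR.interior) isOpen_interior hx₀'
  set v : EuclideanSpace ℝ (Fin p) :=
    (InnerProductSpace.toDual ℝ (EuclideanSpace ℝ (Fin p))).symm f with hv
  have hvf : ∀ y, ⟪v, y⟫ = f y := fun y =>
    InnerProductSpace.toDual_symm_apply
  -- every real α is an intercept
  have key : ∀ α : ℝ, α ∈ endpointIntercepts X Y n x₀ h := by
    intro α
    obtain ⟨t, ht⟩ : ∃ t : ℝ, ∀ i ∈ Finset.range n,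
        (Y i - α) / (f (X i) - f x₀) ≤ t ∧ 0 ≤ t := by
      obtain ⟨t₀, ht₀⟩ := ((Finset.range n).image
        (fun i => (Y i - α) / (f (X i) - f x₀))).exists_le
      refine ⟨max t₀ 0, fun i hi => ⟨?_, le_max_right _ _⟩⟩
      exact (ht₀ _ (Finset.mem_image_of_mem _ hi)).trans (le_max_left _ _)
    refine ⟨t • v, fun i hi hdist => ?_⟩
    have hXi := hX i hi hdist
    have hlt : f (X i) - f x₀ < 0 := sub_neg.2 (hf _ hXi)
    have hinner : ⟪t • v, X i - x₀⟫ = t * (f (X i) - f x₀) := by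
      rw [inner_smul_left, hvf]
      simp [map_sub]
    rw [hinner]
    have h1 : (Y i - α) / (f (X i) - f x₀) ≤ t := (ht i hi).1
    have := (div_le_iff_of_neg hlt).mp h1
    linarith
  rw [endpointEstimator, sSup_eq_top]
  intro b hb
  induction b with
  | bot => exact ⟨(0:ℝ), ⟨0, key 0, rfl⟩, by simp⟩
  | coe r => exact ⟨((r+1:ℝ):EReal), ⟨r+1, key (r+1), rfl⟩, by exact_mod_cast lt_add_one r⟩
  | top => exact absurd hb (lt_irrefl _)
end

section
/- Let $x \in \mathbb{R}^p$, $h > 0$, and data $(X_i, Y_i)$ with $Y_i = a(X_i) + \varepsilon_i$, where $a : \mathbb{R}^p \to \mathbb{R}$ is twice differentiable at $x$ with gradient $\dot{a}(x)$ and Hessian $\ddot{a}(x)$, and $\mathcal{I}(x,h) = \{i : \|X_i - x\| \le h\}$ is nonempty. Suppose that for every $i \in \mathcal{I}(x,h)$ the Taylor remainder satisfies $|a(X_i) - a(x) - \dot{a}(x)^T(X_i - x) - \tfrac{1}{2}(X_i - x)^T \ddot{a}(x)(X_i - x)| \le \delta$. Define $\tilde{\gamma}_2(x) = \sup_{\beta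 \in \mathbb{R}^p} \inf_{i \in \mathcal{I}(x,h)} \{\beta^T(X_i - x) + \tfrac{1}{2}(X_i - x)^T \ddot{a}(x)(X_i - x) + \varepsilon_i\}$. Then $\tilde{a}(x)$ is finite if and only if $\tilde{\gamma}_2(x)$ is finite, and in that case $|\tilde{a}(x) - a(x) - \tilde{\gamma}_2(x)| \le \delta$. -/
/- STATEMENT 11: if the second-order Taylor remainder of a at x is bounded by δ at all
design points in I(x,h), then ã(x) is finite iff γ̃₂(x) is finite, and in that case
|ã(x) - a(x) - γ̃₂(x)| ≤ δ, where
γ̃₂(x) = sup_β inf_{i ∈ I(x,h)} {βᵀ(Xᵢ - x) + ½ (Xᵢ - x)ᵀ ä(x) (Xᵢ - x) + εᵢ}. -/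

open scoped RealInnerProductSpace

private lemma ereal_isup_coe_of_bdd {ι : Type*} [Nonempty ι] {u : ι → ℝ}
    (hb : BddAbove (Set.range u)) :
    (⨆ i, ((u i : ℝ) : EReal)) = ((⨆ i, u i : ℝ) : EReal) := by
  apply le_antisymm
  · exact iSup_le fun i => EReal.coe_le_coe_iff.mpr (le_ciSup hb i)
  · by_contra hlt
    rw [not_le] at hlt
    obtain ⟨r, h1, h2⟩ := EReal.lt_iff_exists_real_btwn.mp hlt
    obtain ⟨i, hi⟩ := exists_lt_of_lt_ciSup (EReal.coe_lt_coe_iff.mp h2)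
    exact absurd ((le_iSup (fun i => ((u i : ℝ) : EReal)) i).trans_lt h1)
      (not_lt.mpr (EReal.coe_le_coe_iff.mpr hi.le))

private lemma ereal_isup_coe_of_unbdd {ι : Type*} [Nonempty ι] {u : ι → ℝ}
    (hb : ¬ BddAbove (Set.range u)) :
    (⨆ i, ((u i : ℝ) : EReal)) = ⊤ := by
  rw [iSup_eq_top]
  intro b hb'
  obtain ⟨r, h1, h2⟩ := EReal.lt_iff_exists_real_btwn.mp hb'
  obtain ⟨y, ⟨i, rfl⟩, hy⟩ := not_bddAbove_iff.mp hb r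
  exact ⟨i, h1.trans (EReal.coe_lt_coe_iff.mpr hy)⟩

private lemma aux_key {ι : Type*} [Nonempty ι] (u v : ι → ℝ) (c δ : ℝ)
    (huv : ∀ i, |u i - c - v i| ≤ δ) :
    ((⨆ i, ((u i : ℝ) : EReal)) ≠ ⊤ ↔ (⨆ i, ((v i : ℝ) : EReal)) ≠ ⊤) ∧
    ((⨆ i, ((u i : ℝ) : EReal)) ≠ ⊤ →
      |(⨆ i, ((u i : ℝ) : EReal)).toReal - c - (⨆ i, ((v i : ℝ) : EReal)).toReal| ≤ δ) := by
  have h1 : ∀ i, u i ≤ c + v i + δ := fun i => by have := abs_le.mp (huv i); linarith [this.2]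
  have h2 : ∀ i, v i ≤ u i - c + δ := fun i => by have := abs_le.mp (huv i); linarith [this.1]
  have hbd : BddAbove (Set.range u) ↔ BddAbove (Set.range v) := by
    constructor <;> rintro ⟨b, hb⟩
    · refine ⟨b - c + δ, fun y hy => ?_⟩
      obtain ⟨i, rfl⟩ := hy
      have := hb (Set.mem_range_self i); linarith [h2 i]
    · refine ⟨c + b + δ, fun y hy => ?_⟩
      obtain ⟨i, rfl⟩ := hy
      have := hb (Set.mem_range_self i); linarith [h1 i]
  have htopu : (⨆ i, ((u i : ℝ) : EReal)) = ⊤ ↔ ¬ BddAbove (Set.range u) := by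
    constructor
    · intro ht hb; rw [ereal_isup_coe_of_bdd hb] at ht; exact EReal.coe_ne_top _ ht
    · exact ereal_isup_coe_of_unbdd
  have htopv : (⨆ i, ((v i : ℝ) : EReal)) = ⊤ ↔ ¬ BddAbove (Set.range v) := by
    constructor
    · intro ht hb; rw [ereal_isup_coe_of_bdd hb] at ht; exact EReal.coe_ne_top _ ht
    · exact ereal_isup_coe_of_unbdd
  constructor
  · exact not_iff_not.mpr (by rw [htopu, htopv, not_iff_not]; exact hbd)
  · intro hu_ne
    have hbu : BddAbove (Set.range u) := by
      by_contra hbu; exact hu_ne (ereal_isup_coe_of_unbdd hbu)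
    have hbv := hbd.mp hbu
    rw [ereal_isup_coe_of_bdd hbu, ereal_isup_coe_of_bdd hbv, EReal.toReal_coe, EReal.toReal_coe]
    have hs1 : (⨆ i, u i) ≤ c + (⨆ i, v i) + δ :=
      ciSup_le fun i => (h1 i).trans (by have := le_ciSup hbv i; linarith)
    have hs2 : (⨆ i, v i) ≤ (⨆ i, u i) - c + δ :=
      ciSup_le fun i => (h2 i).trans (by have := le_ciSup hbu i; linarith)
    rw [abs_le]; constructor <;> linarith

theorem stmt_11 {p n : ℕ} (X : ℕ → EuclideanSpace ℝ (Fin p)) (ε : ℕ → ℝ)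
    (a : EuclideanSpace ℝ (Fin p) → ℝ)
    (x : EuclideanSpace ℝ (Fin p)) (h : ℝ) (hh : 0 < h)
    (hne : ∃ i ∈ Finset.range n, ‖X i - x‖ ≤ h)
    -- a is twice differentiable at x, with gradient `da` and Hessian `H`:
    (da : EuclideanSpace ℝ (Fin p)) (hda : HasGradientAt a da x)
    (H : EuclideanSpace ℝ (Fin p) →L[ℝ] EuclideanSpace ℝ (Fin p) →L[ℝ] ℝ)
    (hH : HasFDerivAt (fderiv ℝ a) H x)
    (δ : ℝ) (hδ : 0 ≤ δ)
    -- the Taylor remainder bound at the design points: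
    (hTaylor : ∀ i ∈ Finset.range n, ‖X i - x‖ ≤ h →
      |a (X i) - a x - ⟪da, X i - x⟫ - (1 / 2) * H (X i - x) (X i - x)| ≤ δ) :
    -- with Y i = a (X i) + ε i and
    -- γ̃₂(x) = sup_β inf_{i ∈ I(x,h)} {βᵀ(Xᵢ-x) + ½ (Xᵢ-x)ᵀ ä(x) (Xᵢ-x) + εᵢ} :
    (endpointEstimator X (fun i => a (X i) + ε i) n x h ≠ ⊤ ↔
      (⨆ β : EuclideanSpace ℝ (Fin p),
        ⨅ i ∈ {i | i ∈ Finset.range n ∧ ‖X i - x‖ ≤ h},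
          ((⟪β, X i - x⟫ + (1 / 2) * H (X i - x) (X i - x) + ε i : ℝ) : EReal)) ≠ ⊤) ∧
    (endpointEstimator X (fun i => a (X i) + ε i) n x h ≠ ⊤ →
      |(endpointEstimator X (fun i => a (X i) + ε i) n x h).toReal - a x -
        (⨆ β : EuclideanSpace ℝ (Fin p),
          ⨅ i ∈ {i | i ∈ Finset.range n ∧ ‖X i - x‖ ≤ h},
            ((⟪β, X i - x⟫ + (1 / 2) * H (X i - x) (X i - x) + ε i : ℝ) : EReal)).toReal|
        ≤ δ) := by
  classical
  set T := (Finset.range n).filter (fun i => ‖X i - x‖ ≤ h) with hTdef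
  have hmem : ∀ i, i ∈ T ↔ i ∈ Finset.range n ∧ ‖X i - x‖ ≤ h := fun i => Finset.mem_filter
  have hT : T.Nonempty := by
    obtain ⟨i, hi1, hi2⟩ := hne; exact ⟨i, (hmem i).mpr ⟨hi1, hi2⟩⟩
  set m : EuclideanSpace ℝ (Fin p) → ℝ :=
    fun β => T.inf' hT (fun i => a (X i) + ε i - ⟪β, X i - x⟫) with hm
  set m₂ : EuclideanSpace ℝ (Fin p) → ℝ :=
    fun β => T.inf' hT (fun i => ⟪β, X i - x⟫ + (1 / 2) * H (X i - x) (X i - x) + ε i) with hm2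
  -- Claim A : the endpoint estimator equals ⨆ β, m β
  have hA : endpointEstimator X (fun i => a (X i) + ε i) n x h = ⨆ β, ((m β : ℝ) : EReal) := by
    unfold endpointEstimator endpointIntercepts
    apply le_antisymm
    · apply sSup_le
      rintro y ⟨α, ⟨β, hβ⟩, rfl⟩
      refine le_trans ?_ (le_iSup _ β)
      refine EReal.coe_le_coe_iff.mpr (Finset.le_inf' hT _ fun i hi => ?_)
      obtain ⟨h1, h2⟩ := (hmem i).mp hi
      have := hβ i h1 h2
      simp only at this
      linarith
    · apply iSup_le
      intro β
      refine le_sSup ⟨m β, ⟨β, fun i h1 h2 => ?_⟩, rfl⟩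
      have : m β ≤ a (X i) + ε i - ⟪β, X i - x⟫ :=
        Finset.inf'_le _ ((hmem i).mpr ⟨h1, h2⟩)
      show m β + ⟪β, X i - x⟫ ≤ a (X i) + ε i
      linarith
  -- Claim B : the inner infimum equals m₂ β
  have hcoe_inf : ∀ (a b : ℝ), ((a ⊓ b : ℝ) : EReal) = (a : EReal) ⊓ (b : EReal) := by
    intro a b
    rcases le_total a b with hab | hab <;>
      simp [min_eq_left, min_eq_right, hab, EReal.coe_le_coe_iff.mpr hab]
  have hB : (⨆ β : EuclideanSpace ℝ (Fin p),
        ⨅ i ∈ {i | i ∈ Finset.range n ∧ ‖X i - x‖ ≤ h},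
          ((⟪β, X i - x⟫ + (1 / 2) * H (X i - x) (X i - x) + ε i : ℝ) : EReal))
      = ⨆ β, ((m₂ β : ℝ) : EReal) := by
    refine iSup_congr fun β => ?_
    have hset : {i | i ∈ Finset.range n ∧ ‖X i - x‖ ≤ h} = (↑T : Set ℕ) := by
      ext i; simp [hmem i]
    rw [hset]
    have e1 : (⨅ i ∈ (↑T : Set ℕ),
        ((⟪β, X i - x⟫ + (1 / 2) * H (X i - x) (X i - x) + ε i : ℝ) : EReal))
        = T.inf (fun i => ((⟪β, X i - x⟫ + (1 / 2) * H (X i - x) (X i - x) + ε i : ℝ) : EReal)) := by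
      rw [Finset.inf_eq_iInf]
      simp only [Finset.mem_coe]
    rw [e1, ← Finset.inf'_eq_inf hT]
    exact (Finset.apply_inf'_eq_inf'_comp hT (fun r : ℝ => (r : EReal)) hcoe_inf).symm
  rw [hA, hB]
  -- reindex the supremum of m₂ by β ↦ da - β
  have hre : (⨆ β, ((m₂ β : ℝ) : EReal)) = ⨆ β, ((m₂ (da - β) : ℝ) : EReal) :=
    ((Equiv.subLeft da).iSup_comp (g := fun β => ((m₂ β : ℝ) : EReal))).symm
  rw [hre]
  -- the pointwise comparison
  have hcomp : ∀ β, |m β - a x - m₂ (da - β)| ≤ δ := by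
    intro β
    have hpt : ∀ i ∈ T,
        |(a (X i) + ε i - ⟪β, X i - x⟫) - a x -
          (⟪da - β, X i - x⟫ + (1 / 2) * H (X i - x) (X i - x) + ε i)| ≤ δ := by
      intro i hi
      obtain ⟨h1, h2⟩ := (hmem i).mp hi
      have ht := hTaylor i h1 h2
      rw [inner_sub_left]
      convert ht using 2
      ring
    obtain ⟨i₀, hi₀, hg₀⟩ := Finset.exists_mem_eq_inf' hT
      (fun i => ⟪da - β, X i - x⟫ + (1 / 2) * H (X i - x) (X i - x) + ε i)
    obtain ⟨i₁, hi₁, hf₁⟩ := Finset.exists_mem_eq_inf' hT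
      (fun i => a (X i) + ε i - ⟪β, X i - x⟫)
    have hle1 : m β ≤ a (X i₀) + ε i₀ - ⟪β, X i₀ - x⟫ := Finset.inf'_le _ hi₀
    have hle2 : m₂ (da - β) ≤ ⟪da - β, X i₁ - x⟫ + (1 / 2) * H (X i₁ - x) (X i₁ - x) + ε i₁ :=
      Finset.inf'_le _ hi₁
    have hb0 := abs_le.mp (hpt i₀ hi₀)
    have hb1 := abs_le.mp (hpt i₁ hi₁)
    have hm2eq : m₂ (da - β) = ⟪da - β, X i₀ - x⟫ + (1 / 2) * H (X i₀ - x) (X i₀ - x) + ε i₀ := by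
      rw [hm2]; exact hg₀
    have hmeq : m β = a (X i₁) + ε i₁ - ⟪β, X i₁ - x⟫ := by
      rw [hm]; exact hf₁
    rw [abs_le]
    constructor
    · linarith [hb1.1, hle2, hmeq]
    · linarith [hb0.2, hle1, hm2eq]
  exact aux_key m (fun β => m₂ (da - β)) (a x) δ hcomp
end
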